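/- Let B be a positive bounded operator on a complex Hilbert space H, let K be a complex Hilbert space, and let J : K → H be an injective continuous linear map with J ∘ J* = B. Then the map Ψ(P) := J ∘ P ∘ J* is a bijection from the set of orthogonal projections on K (continuous linear P : K → K with P* = P and P ∘ P = P) onto the set of extreme points of the operator interval [0,B], and moreover for all orthogonal projections P, Q on K one has Ψ(P) ≤ Ψ(Q) if and only if P ≤ Q. -/

import Mathlib

open scoped ComplexOrder

/-- `A` is a positive operator: `⟪A x, x⟫ ≥ 0` for all `x`. -/
def IsPosOp {H : Type*} [NormedAddCommGroup H] [InnerProductSpace ℂ H]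
    (A : H →L[ℂ] H) : Prop :=
  ∀ x : H, 0 ≤ (inner ℂ (A x) x : ℂ)

/-- The Loewner order: `A ≤ B` iff `B - A` is positive. -/
def OpLe {H : Type*} [NormedAddCommGroup H] [InnerProductSpace ℂ H]
    (A B : H →L[ℂ] H) : Prop :=
  IsPosOp (B - A)

/-- The quadratic form of an operator: `A[x] = re ⟪A x, x⟫`. -/
noncomputable def QF {H : Type*} [NormedAddCommGroup H] [InnerProductSpace ℂ H]
    (A : H →L[ℂ] H) (x : H) : ℝ :=
  (inner ℂ (A x) x : ℂ).re

/-- `A` and `B` are singular: the only positive operator below both is `0`. -/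
def SingOp {H : Type*} [NormedAddCommGroup H] [InnerProductSpace ℂ H]
    (A B : H →L[ℂ] H) : Prop :=
  ∀ C : H →L[ℂ] H, IsPosOp C → OpLe C A → OpLe C B → C = 0

/-- `B` is `A`-absolutely continuous: `B` is the strong limit of a monotone increasing
sequence of positive operators, each dominated by a nonnegative multiple of `A`. -/
def AbsCont {H : Type*} [NormedAddCommGroup H] [InnerProductSpace ℂ H]
    (B A : H →L[ℂ] H) : Prop :=
  ∃ Bn : ℕ → H →L[ℂ] H,
    (∀ n, IsPosOp (Bn n)) ∧
    (∀ m n, m ≤ n → OpLe (Bn m) (Bn n)) ∧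
    (∀ n, ∃ c : ℝ, 0 ≤ c ∧ OpLe (Bn n) (c • A)) ∧
    (∀ x : H, Filter.Tendsto (fun n => Bn n x) Filter.atTop (nhds (B x)))

/-- `S = [A]B`: the quadratic form of `S` is `sup_n inf_y (B[x-y] + n·A[y])`. -/
def IsShort {H : Type*} [NormedAddCommGroup H] [InnerProductSpace ℂ H]
    (A B S : H →L[ℂ] H) : Prop :=
  ∀ x : H, QF S x = ⨆ n : ℕ, ⨅ y : H, (QF B (x - y) + (n : ℝ) * QF A y)

/-!
`conjAdjoint J : T ↦ J T J†` is linear, and since `J†` has dense range it is injective and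
reflects the Loewner order. By Douglas' factorization lemma it maps `[0, 1]` onto
`[0, J J†] = [0, B]`. An injective linear map carries the extreme points of a set onto those of
its image, and the extreme points of `[0, 1]` in the C⋆-algebra of operators on `K` are exactly
its projections.
-/

open Set ContinuousLinearMap
open scoped InnerProduct

theorem isPosOp_iff_nonneg {H : Type*} [NormedAddCommGroup H] [InnerProductSpace ℂ H]
    (A : H →L[ℂ] H) : IsPosOp A ↔ 0 ≤ A := by
  rw [nonneg_iff_isPositive, isPositive_iff, IsPosOp, iff_and_self]
  intro h
  exact LinearMap.isSymmetric_iff_inner_map_self_real _ |>.mpr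
    fun x => Complex.conj_eq_iff_im.mpr (Complex.nonneg_iff.mp (h x)).2.symm

theorem opLe_iff_le {H : Type*} [NormedAddCommGroup H] [InnerProductSpace ℂ H]
    (A B : H →L[ℂ] H) : OpLe A B ↔ A ≤ B := by
  rw [OpLe, isPosOp_iff_nonneg, nonneg_iff_isPositive, le_def]

theorem LinearMap.image_extremePoints_of_injective {𝕜 E F : Type*} [Ring 𝕜] [PartialOrder 𝕜]
    [IsOrderedRing 𝕜] [AddCommGroup E] [Module 𝕜 E] [AddCommGroup F] [Module 𝕜 F]
    {f : E →ₗ[𝕜] F} (hf : Function.Injective f) (s : Set E) :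
    f '' extremePoints 𝕜 s = extremePoints 𝕜 (f '' s) := by
  have : ∀ x y, f '' openSegment 𝕜 x y = openSegment 𝕜 (f x) (f y) :=
    image_openSegment _ f.toAffineMap
  ext b
  constructor
  · rintro ⟨a, ⟨ha, hext⟩, rfl⟩
    refine ⟨mem_image_of_mem f ha, ?_⟩
    rintro _ ⟨x, hx, rfl⟩ _ ⟨y, hy, rfl⟩ hxy
    rw [← this, hf.mem_set_image] at hxy
    simpa only [hf.eq_iff] using hext hx hy hxy
  · rintro ⟨⟨a, ha, rfl⟩, hext⟩
    refine ⟨a, ⟨ha, fun x hx y hy hxy => ?_⟩, rfl⟩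
    simpa only [hf.eq_iff] using
      hext (mem_image_of_mem f hx) (mem_image_of_mem f hy) (this x y ▸ mem_image_of_mem f hxy)

theorem isStarProjection_iff_mem_extremePoints_Icc {A : Type*} [CStarAlgebra A] [PartialOrder A]
    [StarOrderedRing A] {e : A} : IsStarProjection e ↔ e ∈ extremePoints ℝ (Icc 0 1) := by
  have : Icc (0 : A) 1 = {x | 0 ≤ x} ∩ Metric.closedBall 0 1 := by
    ext a
    rw [CStarAlgebra.mem_Icc_iff_norm_le_one, mem_inter_iff, mem_closedBall_zero_iff]
    rfl
  rw [this]
  exact isStarProjection_iff_mem_extremePoints_setOfPred_nonneg_inter_unitClosedBall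

theorem ContinuousLinearMap.exists_opNorm_le_comp_eq {𝕜 E F G : Type*} [NontriviallyNormedField 𝕜]
    [NormedAddCommGroup E] [NormedSpace 𝕜 E] [NormedAddCommGroup F] [NormedSpace 𝕜 F]
    [NormedAddCommGroup G] [NormedSpace 𝕜 G] [CompleteSpace G]
    {R : E →L[𝕜] G} {A : E →L[𝕜] F} (hA : DenseRange A) {c : ℝ} (hc : 0 ≤ c)
    (h : ∀ x, ‖R x‖ ≤ c * ‖A x‖) : ∃ S : F →L[𝕜] G, ‖S‖ ≤ c ∧ S ∘L A = R := by
  refine ⟨(R : E →ₗ[𝕜] G).extendOfNorm A, LinearMap.opNorm_extendOfNorm_le hA hc h, ?_⟩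
  ext x
  exact LinearMap.extendOfNorm_eq hA ⟨c, h⟩ x

namespace ContinuousLinearMap

section RCLike

variable {𝕜 E F G : Type*} [RCLike 𝕜]
  [NormedAddCommGroup E] [InnerProductSpace 𝕜 E] [CompleteSpace E]
  [NormedAddCommGroup F] [InnerProductSpace 𝕜 F] [CompleteSpace F]
  [NormedAddCommGroup G] [InnerProductSpace 𝕜 G] [CompleteSpace G]

theorem isStarProjection_iff_adjoint_eq_and_comp_self {P : E →L[𝕜] E} :
    IsStarProjection P ↔ P† = P ∧ P ∘L P = P := by
  rw [isStarProjection_iff', and_comm, star_eq_adjoint, mul_def]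

theorem adjoint_comp_self_le_adjoint_comp_self_iff (R : E →L[𝕜] G) (A : E →L[𝕜] F) :
    R† ∘L R ≤ A† ∘L A ↔ ∀ x, ‖R x‖ ≤ ‖A x‖ := by
  have hsa : IsSelfAdjoint (A† ∘L A - R† ∘L R) :=
    (isPositive_adjoint_comp_self A).isSelfAdjoint.sub
      (isPositive_adjoint_comp_self R).isSelfAdjoint
  rw [le_def, isPositive_def', and_iff_right hsa]
  refine forall_congr' fun x => ?_
  rw [reApplyInnerSelf_apply, sub_apply, inner_sub_left, map_sub, sub_nonneg,
    ← apply_norm_sq_eq_inner_adjoint_left, ← apply_norm_sq_eq_inner_adjoint_left,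
    sq_le_sq₀ (norm_nonneg _) (norm_nonneg _)]

theorem denseRange_adjoint_of_injective {J : F →L[𝕜] E} (hJ : Function.Injective J) :
    DenseRange (J†) := by
  have : (J†).rangeᗮ = ⊥ := by
    rw [orthogonal_range, adjoint_adjoint]
    exact LinearMap.ker_eq_bot.mpr hJ
  exact Submodule.dense_iff_topologicalClosure_eq_top.mpr
    (Submodule.topologicalClosure_eq_top_iff.mpr this)

noncomputable def conjAdjoint (J : F →L[𝕜] E) : (F →L[𝕜] F) →ₗ[𝕜] (E →L[𝕜] E) where
  toFun D := J ∘L D ∘L J†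
  map_add' D D' := by simp only [add_comp, comp_add]
  map_smul' c D := by simp only [smul_comp, comp_smul, RingHom.id_apply]

@[simp]
theorem conjAdjoint_apply (J : F →L[𝕜] E) (D : F →L[𝕜] F) : conjAdjoint J D = J ∘L D ∘L J† :=
  rfl

variable {J : F →L[𝕜] E}

theorem conjAdjoint_injective (hJ : Function.Injective J) : Function.Injective (conjAdjoint J) := by
  refine (injective_iff_map_eq_zero _).mpr fun X hX => ?_
  have hXJ : ∀ x, X ((J†) x) = 0 := fun x => hJ (by simpa using congr($hX x))
  ext z
  exact (denseRange_adjoint_of_injective hJ).induction_on z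
    (isClosed_eq X.continuous continuous_const) hXJ

theorem isPositive_conjAdjoint_iff (hJ : Function.Injective J) {D : F →L[𝕜] F} :
    (conjAdjoint J D).IsPositive ↔ D.IsPositive := by
  refine ⟨fun h => ?_, fun h => h.conj_adjoint J⟩
  have hsa : D† = D := conjAdjoint_injective hJ <| by
    simpa [adjoint_comp, comp_assoc] using h.isSelfAdjoint.adjoint_eq
  refine isPositive_def'.mpr ⟨hsa, fun z => ?_⟩
  refine (denseRange_adjoint_of_injective hJ).induction_on z
    (isClosed_le continuous_const D.reApplyInnerSelf_continuous) fun x => ?_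
  simpa [reApplyInnerSelf_apply, adjoint_inner_right] using h.re_inner_nonneg_left x

theorem conjAdjoint_le_conjAdjoint_iff (hJ : Function.Injective J) {P Q : F →L[𝕜] F} :
    conjAdjoint J P ≤ conjAdjoint J Q ↔ P ≤ Q := by
  rw [le_def, le_def, ← map_sub, isPositive_conjAdjoint_iff hJ]

theorem conjAdjoint_one : conjAdjoint J 1 = J ∘L J† := by
  ext; simp

end RCLike

section Complex

variable {E F : Type*}
  [NormedAddCommGroup E] [InnerProductSpace ℂ E] [CompleteSpace E]
  [NormedAddCommGroup F] [InnerProductSpace ℂ F] [CompleteSpace F] {J : F →L[ℂ] E}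

/- Douglas' factorization: `C = R†R` with `‖R x‖ ≤ ‖J† x‖`, so `R = S J†` with `‖S‖ ≤ 1`. -/

theorem exists_mem_Icc_conjAdjoint_eq (hJ : DenseRange (J†)) {C : E →L[ℂ] E} (hC0 : 0 ≤ C)
    (hC : C ≤ J ∘L J†) : ∃ T ∈ Icc 0 1, conjAdjoint J T = C := by
  obtain ⟨R, rfl⟩ := CStarAlgebra.nonneg_iff_eq_star_mul_self.mp hC0
  rw [star_eq_adjoint, mul_def] at hC ⊢
  have hRJ : ∀ x, ‖R x‖ ≤ 1 * ‖(J†) x‖ := by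
    simpa using (adjoint_comp_self_le_adjoint_comp_self_iff R (J†)).mp (by rwa [adjoint_adjoint])
  obtain ⟨S, hS, rfl⟩ := exists_opNorm_le_comp_eq hJ zero_le_one hRJ
  refine ⟨S† ∘L S, ⟨(nonneg_iff_isPositive _).mpr (isPositive_adjoint_comp_self S), ?_⟩, ?_⟩
  · have := (adjoint_comp_self_le_adjoint_comp_self_iff S (.id ℂ F)).mpr
      fun z => by simpa using S.le_of_opNorm_le hS z
    rw [one_def]
    simpa [adjoint_id] using this
  · ext x; simp [adjoint_comp]

theorem image_conjAdjoint_Icc (hJ : Function.Injective J) :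
    conjAdjoint J '' Icc 0 1 = Icc 0 (J ∘L J†) := by
  refine Subset.antisymm ?_ fun C ⟨hC0, hC⟩ =>
    exists_mem_Icc_conjAdjoint_eq (denseRange_adjoint_of_injective hJ) hC0 hC
  rintro _ ⟨T, ⟨hT0, hT1⟩, rfl⟩
  rw [← conjAdjoint_one, ← map_zero (conjAdjoint J)]
  exact ⟨(conjAdjoint_le_conjAdjoint_iff hJ).mpr hT0, (conjAdjoint_le_conjAdjoint_iff hJ).mpr hT1⟩

end Complex

end ContinuousLinearMap

theorem projections_biject_with_extreme_points_general
    {H : Type*} [NormedAddCommGroup H] [InnerProductSpace ℂ H] [CompleteSpace H]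
    {K : Type*} [NormedAddCommGroup K] [InnerProductSpace ℂ K] [CompleteSpace K]
    (B : H →L[ℂ] H)
    (J : K →L[ℂ] H) (hJ : Function.Injective J)
    (hJB : J.comp (ContinuousLinearMap.adjoint J) = B) :
    Set.BijOn (fun P : K →L[ℂ] K => J.comp (P.comp (ContinuousLinearMap.adjoint J)))
      {P : K →L[ℂ] K | ContinuousLinearMap.adjoint P = P ∧ P.comp P = P}
      (Set.extremePoints ℝ {C : H →L[ℂ] H | IsPosOp C ∧ OpLe C B}) ∧
    ∀ P Q : K →L[ℂ] K,
      (ContinuousLinearMap.adjoint P = P ∧ P.comp P = P) →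
      (ContinuousLinearMap.adjoint Q = Q ∧ Q.comp Q = Q) →
      (OpLe (J.comp (P.comp (ContinuousLinearMap.adjoint J)))
          (J.comp (Q.comp (ContinuousLinearMap.adjoint J))) ↔ OpLe P Q) := by
  subst hJB
  have hproj : {P : K →L[ℂ] K | P† = P ∧ P ∘L P = P} = extremePoints ℝ (Icc 0 1) := by
    ext P
    rw [mem_ofPred_eq, ← isStarProjection_iff_adjoint_eq_and_comp_self,
      isStarProjection_iff_mem_extremePoints_Icc]
  have hinterval : {C : H →L[ℂ] H | IsPosOp C ∧ OpLe C (J ∘L J†)} = Icc 0 (J ∘L J†) := by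
    ext C
    exact and_congr (isPosOp_iff_nonneg C) (opLe_iff_le C _)
  have hΨ : Function.Injective ((conjAdjoint J).restrictScalars ℝ) := conjAdjoint_injective hJ
  refine ⟨?_, fun P Q _ _ => ?_⟩
  · rw [hproj, hinterval, ← image_conjAdjoint_Icc hJ]
    have := LinearMap.image_extremePoints_of_injective hΨ (Icc 0 1)
    rw [LinearMap.coe_restrictScalars] at this
    rw [← this]
    exact hΨ.injOn.bijOn_image
  · rw [opLe_iff_le, opLe_iff_le]
    exact conjAdjoint_le_conjAdjoint_iff hJ

theorem projections_biject_with_extreme_points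
    {H : Type*} [NormedAddCommGroup H] [InnerProductSpace ℂ H] [CompleteSpace H]
    {K : Type*} [NormedAddCommGroup K] [InnerProductSpace ℂ K] [CompleteSpace K]
    (B : H →L[ℂ] H) (hB : IsPosOp B)
    (J : K →L[ℂ] H) (hJ : Function.Injective J)
    (hJB : J.comp (ContinuousLinearMap.adjoint J) = B) :
    Set.BijOn (fun P : K →L[ℂ] K => J.comp (P.comp (ContinuousLinearMap.adjoint J)))
      {P : K →L[ℂ] K | ContinuousLinearMap.adjoint P = P ∧ P.comp P = P}
      (Set.extremePoints ℝ {C : H →L[ℂ] H | IsPosOp C ∧ OpLe C B}) ∧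
    ∀ P Q : K →L[ℂ] K,
      (ContinuousLinearMap.adjoint P = P ∧ P.comp P = P) →
      (ContinuousLinearMap.adjoint Q = Q ∧ Q.comp Q = Q) →
      (OpLe (J.comp (P.comp (ContinuousLinearMap.adjoint J)))
          (J.comp (Q.comp (ContinuousLinearMap.adjoint J))) ↔ OpLe P Q) :=
  projections_biject_with_extreme_points_general B J hJ hJB
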